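/- arXiv:1902.04195 — 4 statements merged into one kernel-verified Lean document; each statement's English description precedes it below -/
import Mathlib

section
/- Let W be an n×n real symmetric positive definite matrix and τ a real number. Then n·τ − tr(W⁻¹) ≥ 0 holds if and only if there exists an n×n real symmetric matrix P with n·τ − tr(P) ≥ 0 and the block matrix [[W, I_n],[I_n, P]] positive semidefinite. -/
open Matrix

theorem Matrix.PosDef.posSemidef_fromBlocks_one_one_iff {m K : Type*} [Fintype m] [DecidableEq m]
    [Field K] [PartialOrder K] [StarRing K] [StarOrderedRing K] {A D : Matrix m m K}
    (hA : A.PosDef) :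
    (fromBlocks A 1 1 D).PosSemidef ↔ (D - A⁻¹).PosSemidef := by
  have : Invertible A := hA.isUnit.invertible
  simpa using hA.fromBlocks₁₁ 1 D

/-- For `W ≻ 0`, the trace-inverse condition `n·τ − tr(W⁻¹) ≥ 0` holds iff there exists a
symmetric `P` with `n·τ − tr(P) ≥ 0` and `[[W, I],[I, P]] ⪰ 0`. -/
theorem stmt_6 {n : ℕ} (W : Matrix (Fin n) (Fin n) ℝ) (hW : W.PosDef) (τ : ℝ) :
    (n * τ - (W⁻¹).trace ≥ 0) ↔
      ∃ P : Matrix (Fin n) (Fin n) ℝ, P.IsSymm ∧ n * τ - P.trace ≥ 0 ∧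
        (Matrix.fromBlocks W (1 : Matrix (Fin n) (Fin n) ℝ)
          (1 : Matrix (Fin n) (Fin n) ℝ) P).PosSemidef := by
  simp only [hW.posSemidef_fromBlocks_one_one_iff]
  constructor
  · intro h
    refine ⟨W⁻¹, isHermitian_iff_isSymm.mp hW.isHermitian.inv, h, ?_⟩
    rw [sub_self]
    exact .zero
  · rintro ⟨P, -, hτ, hPW⟩
    have htrace := hPW.trace_nonneg
    rw [trace_sub] at htrace
    linarith
end

section
/- Let X ∈ ℝ^{m×n}, let r ≤ min{m,n}, and let L ∈ ℝ^{r×m}, R ∈ ℝ^{r×n} satisfy LLᵀ = I_r and RRᵀ = I_r. Then tr(L X Rᵀ) ≤ σ₁(X) + σ₂(X) + ⋯ + σ_r(X), the sum of the r largest singular values of X (Von Neumann's trace inequality for partial isometries). -/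
/-
Diagonalize `XᵀX = V diag(σ²) Vᵀ` with `V` orthogonal and put `a_j = L X v_j`, `b_j = R v_j` for
the columns `v_j` of `V`. Then `tr(L X Rᵀ) = ∑ⱼ ⟨a_j, b_j⟩` and `|a_j| ≤ σ_j`, and AM-GM gives
`⟨a_j, b_j⟩ ≤ σ_j c_j` with `c_j = (|a_j|²/σ_j² + |b_j|²)/2`. Since `L` and `R` are contractions,
`0 ≤ c_j ≤ 1`; and `∑ c_j ≤ r`, because `∑ |b_j|² = tr(R Rᵀ) = r` while
`∑ |a_j|²/σ_j² = tr(L P Lᵀ) ≤ tr(L Lᵀ) = r` for the orthogonal projection `P = X (XᵀX)⁺ Xᵀ`.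
Finally, with weights `c_j ∈ [0, 1]` of total at most `r`, `∑ σ_j c_j` is largest when the weight
sits on the `r` largest `σ_j`.
-/

open Matrix Finset

/-- The singular values of a real matrix `X` (square roots of the eigenvalues of `XᴴX`),
arranged in decreasing order, as a function `ℕ → ℝ` which is `0` from the number of
columns onwards. -/
noncomputable def svals {I J : Type*} [Fintype I] [Fintype J] [DecidableEq J]
    (X : Matrix I J ℝ) : ℕ → ℝ := fun i =>
  let f : Fin (Fintype.card J) → ℝ := fun j =>
    Real.sqrt ((Matrix.isHermitian_conjTranspose_mul_self X).eigenvalues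
      ((Fintype.equivFin J).symm j))
  if h : i < Fintype.card J then f (Tuple.sort f (Fin.rev ⟨i, h⟩)) else 0

theorem sum_mul_le_sum_range_of_antitone {N r : ℕ} {s : ℕ → ℝ} (hs : Antitone s)
    (hsr : 0 ≤ s r) (c : Fin N → ℝ) (hc0 : ∀ i, 0 ≤ c i) (hc1 : ∀ i, c i ≤ 1)
    (hcr : ∑ i, c i ≤ r) :
    ∑ i : Fin N, s i * c i ≤ ∑ i ∈ range r, s i := by
  set t := s r
  have hpoint : ∀ i : Fin N, s i * c i ≤ max (s i - t) 0 + t * c i := by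
    intro i
    rcases le_total t (s i) with h | h
    · nlinarith [hc1 i, le_max_left (s i - t) 0]
    · nlinarith [hc0 i, le_max_right (s i - t) 0]
  have hexcess : ∑ i : Fin N, max (s i - t) 0 ≤ ∑ i ∈ range r, (s i - t) := by
    rw [Fin.sum_univ_eq_sum_range (fun i => max (s i - t) 0)]
    calc ∑ i ∈ range N, max (s i - t) 0 ≤ ∑ i ∈ range (max N r), max (s i - t) 0 :=
          sum_le_sum_of_subset_of_nonneg (range_subset_range.2 (le_max_left N r))
            fun _ _ _ => le_max_right _ _
      _ = ∑ i ∈ range r, max (s i - t) 0 := by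
          refine (sum_subset (range_subset_range.2 (le_max_right N r)) fun i _ hi => ?_).symm
          exact max_eq_right (sub_nonpos.2 (hs (not_lt.1 (mem_range.not.1 hi))))
      _ = ∑ i ∈ range r, (s i - t) :=
          sum_congr rfl fun i hi => max_eq_left (sub_nonneg.2 (hs (mem_range.1 hi).le))
  calc ∑ i : Fin N, s i * c i ≤ ∑ i : Fin N, (max (s i - t) 0 + t * c i) :=
        sum_le_sum fun i _ => hpoint i
    _ = ∑ i : Fin N, max (s i - t) 0 + t * ∑ i, c i := by
        rw [sum_add_distrib, mul_sum]
    _ ≤ ∑ i ∈ range r, (s i - t) + t * r := by gcongr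
    _ = ∑ i ∈ range r, s i := by
        rw [sum_sub_distrib, sum_const, card_range, nsmul_eq_mul]; ring

section Columns

variable {K I J : Type*} [Fintype K] [Fintype I]

theorem dotProduct_self_nonneg (v : I → ℝ) : 0 ≤ v ⬝ᵥ v :=
  Fintype.sum_nonneg fun i => mul_self_nonneg (v i)

theorem trace_mul_transpose_eq_sum_dotProduct [Fintype J] (A B : Matrix K J ℝ) :
    (A * Bᵀ).trace = ∑ j, Aᵀ j ⬝ᵥ Bᵀ j := by
  rw [← trace_transpose_mul]
  rfl

-- `|y|² - |L y|² = |y - Lᵀ L y|²`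
theorem dotProduct_mulVec_self_le_of_mul_transpose_eq_one [DecidableEq K] {L : Matrix K I ℝ}
    (hL : L * Lᵀ = 1) (y : I → ℝ) : (L *ᵥ y) ⬝ᵥ (L *ᵥ y) ≤ y ⬝ᵥ y := by
  set w := L *ᵥ y
  have hzz : (Lᵀ *ᵥ w) ⬝ᵥ (Lᵀ *ᵥ w) = w ⬝ᵥ w := by
    rw [dotProduct_mulVec, vecMul_transpose, mulVec_mulVec, hL, one_mulVec]
  have hzy : (Lᵀ *ᵥ w) ⬝ᵥ y = w ⬝ᵥ w := by
    rw [mulVec_transpose, ← dotProduct_mulVec]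
  have := dotProduct_self_nonneg (y - Lᵀ *ᵥ w)
  simp only [sub_dotProduct, dotProduct_sub, dotProduct_comm y, hzz, hzy] at this
  linarith

theorem transpose_dotProduct_self_le_one [Fintype J] [DecidableEq K] [DecidableEq J]
    {B : Matrix K J ℝ} (hB : B * Bᵀ = 1) (j : J) : Bᵀ j ⬝ᵥ Bᵀ j ≤ 1 := by
  have h := dotProduct_mulVec_self_le_of_mul_transpose_eq_one hB (Pi.single j 1)
  rwa [mulVec_single_one, dotProduct_single_one, Pi.single_eq_same] at h

theorem transpose_mul_dotProduct_self_le [DecidableEq K] {L : Matrix K I ℝ}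
    (hL : L * Lᵀ = 1) (W : Matrix I J ℝ) (j : J) :
    (L * W)ᵀ j ⬝ᵥ (L * W)ᵀ j ≤ (Wᵀ * W) j j := by
  have : (L * W)ᵀ j = L *ᵥ Wᵀ j := by
    rw [transpose_mul]; exact vecMul_transpose L (Wᵀ j)
  rw [this]
  exact dotProduct_mulVec_self_le_of_mul_transpose_eq_one hL _

theorem trace_mul_mul_transpose_le_of_isSymm_of_isIdempotentElem [DecidableEq I]
    {P : Matrix I I ℝ} (hPs : P.IsSymm) (hPP : IsIdempotentElem P) (L : Matrix K I ℝ) :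
    (L * P * Lᵀ).trace ≤ (L * Lᵀ).trace := by
  have hQ : (1 - P) * (1 - P)ᵀ = 1 - P := by
    rw [transpose_sub, transpose_one, hPs.eq, sub_mul, mul_sub, mul_sub, hPP.eq]
    simp
  have hnonneg : 0 ≤ ((L * (1 - P)) * (L * (1 - P))ᵀ).trace := by
    rw [trace_mul_transpose_eq_sum_dotProduct]
    exact Fintype.sum_nonneg fun j => dotProduct_self_nonneg _
  rw [transpose_mul, ← Matrix.mul_assoc, Matrix.mul_assoc L, hQ, Matrix.mul_sub, Matrix.mul_one,
    Matrix.sub_mul, trace_sub] at hnonneg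
  linarith

theorem sum_dotProduct_div_le_card [Fintype J] [DecidableEq K] [DecidableEq J]
    {W : Matrix I J ℝ} {μ : J → ℝ} (hW : Wᵀ * W = diagonal μ) {L : Matrix K I ℝ}
    (hL : L * Lᵀ = 1) : ∑ j, (L * W)ᵀ j ⬝ᵥ (L * W)ᵀ j / μ j ≤ Fintype.card K := by
  classical
  set D := diagonal fun j => (μ j)⁻¹
  set P := W * D * Wᵀ
  have hcol : ∀ j, (L * W * D)ᵀ j = (μ j)⁻¹ • (L * W)ᵀ j := by
    intro j; ext k
    simp only [D, transpose_apply, mul_diagonal, Pi.smul_apply, smul_eq_mul, mul_comm]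
  have hPs : P.IsSymm := by
    simp only [IsSymm, P, D, transpose_mul, diagonal_transpose, transpose_transpose,
      Matrix.mul_assoc]
  -- `0⁻¹ = 0` makes `D μ D = D` also where `μ` vanishes, so `P` is a projection.
  have hPP : IsIdempotentElem P := by
    have hDD : D * diagonal μ * D = D := by
      simp only [D, diagonal_mul_diagonal]
      congr 1; ext j; simpa using mul_inv_mul_cancel (μ j)⁻¹
    calc P * P = W * (D * (Wᵀ * W) * D) * Wᵀ := by simp only [P, Matrix.mul_assoc]
      _ = P := by rw [hW, hDD]
  calc ∑ j, (L * W)ᵀ j ⬝ᵥ (L * W)ᵀ j / μ j = (L * P * Lᵀ).trace := by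
        rw [show L * P * Lᵀ = L * W * (L * W * D)ᵀ by
          simp only [P, D, transpose_mul, diagonal_transpose, Matrix.mul_assoc],
          trace_mul_transpose_eq_sum_dotProduct]
        simp [hcol, div_eq_inv_mul]
    _ ≤ (L * Lᵀ).trace := trace_mul_mul_transpose_le_of_isSymm_of_isIdempotentElem hPs hPP L
    _ = Fintype.card K := by rw [hL, trace_one]

-- For `μ = 0` both sides vanish: `a = 0`, and `a ⬝ᵥ a / μ = 0 / 0 = 0`.
theorem dotProduct_le_sqrt_mul_add_div_two {a b : I → ℝ} {μ : ℝ} (ha : a ⬝ᵥ a ≤ μ) :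
    a ⬝ᵥ b ≤ √μ * ((a ⬝ᵥ a / μ + b ⬝ᵥ b) / 2) := by
  rcases (dotProduct_self_nonneg a).trans ha |>.eq_or_lt with hμ | hμ
  · obtain rfl : a = 0 :=
      dotProduct_self_eq_zero.1 (le_antisymm (hμ ▸ ha) (dotProduct_self_nonneg a))
    simp [← hμ]
  · set s := √μ
    have hs : 0 < s := Real.sqrt_pos.2 hμ
    have hss : s * s = μ := Real.mul_self_sqrt hμ.le
    have := dotProduct_self_nonneg (a - s • b)
    simp only [sub_dotProduct, dotProduct_sub, smul_dotProduct, dotProduct_smul, smul_eq_mul,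
      dotProduct_comm b a] at this
    rw [← hss]
    field_simp
    nlinarith

end Columns

section SingularValues

variable {I J : Type*} [Fintype I] [Fintype J] [DecidableEq J]

theorem exists_mul_transpose_eq_one_and_transpose_mul_eq_diagonal (X : Matrix I J ℝ) :
    ∃ V : Matrix J J ℝ, V * Vᵀ = 1 ∧
      (X * V)ᵀ * (X * V) = diagonal (isHermitian_conjTranspose_mul_self X).eigenvalues := by
  set hX := isHermitian_conjTranspose_mul_self X
  refine ⟨hX.eigenvectorUnitary, ?_, ?_⟩
  · simpa [star_eq_conjTranspose] using mem_unitaryGroup_iff.1 hX.eigenvectorUnitary.2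
  · have := hX.conjStarAlgAut_star_eigenvectorUnitary
    rw [Unitary.conjStarAlgAut_star_apply] at this
    simpa [star_eq_conjTranspose, transpose_mul, Matrix.mul_assoc] using this

theorem svals_nonneg (X : Matrix I J ℝ) (i : ℕ) : 0 ≤ svals X i := by
  unfold svals; split_ifs
  exacts [Real.sqrt_nonneg _, le_rfl]

theorem svals_antitone (X : Matrix I J ℝ) : Antitone (svals X) := by
  intro i j hij
  unfold svals
  split_ifs with hj hi hi
  · exact Tuple.monotone_sort
      (f := fun k => √((isHermitian_conjTranspose_mul_self X).eigenvalues
        ((Fintype.equivFin J).symm k)))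
      (Fin.rev_le_rev.2 (Fin.mk_le_mk.2 hij))
  · omega
  · exact Real.sqrt_nonneg _
  · exact le_rfl

theorem exists_equiv_svals_eq (X : Matrix I J ℝ) :
    ∃ e : Fin (Fintype.card J) ≃ J, ∀ i : Fin (Fintype.card J),
      svals X i = √((isHermitian_conjTranspose_mul_self X).eigenvalues (e i)) := by
  refine ⟨(Fin.revPerm.trans (Tuple.sort fun k =>
    √((isHermitian_conjTranspose_mul_self X).eigenvalues ((Fintype.equivFin J).symm k)))).trans
      (Fintype.equivFin J).symm, fun i => ?_⟩
  simp [svals]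

end SingularValues

theorem exists_weights_trace_le_sum_sqrt_mul {K I J : Type*} [Fintype K] [Fintype I] [Fintype J]
    [DecidableEq K] [DecidableEq J] {X : Matrix I J ℝ} {V : Matrix J J ℝ} {μ : J → ℝ}
    (hV : V * Vᵀ = 1) (hXV : (X * V)ᵀ * (X * V) = diagonal μ)
    {L : Matrix K I ℝ} {R : Matrix K J ℝ} (hL : L * Lᵀ = 1) (hR : R * Rᵀ = 1) :
    ∃ c : J → ℝ, (∀ j, 0 ≤ c j) ∧ (∀ j, c j ≤ 1) ∧ ∑ j, c j ≤ Fintype.card K ∧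
      (L * X * Rᵀ).trace ≤ ∑ j, √(μ j) * c j := by
  set A := L * (X * V)
  set B := R * V
  have hB : B * Bᵀ = 1 := by
    rw [transpose_mul, Matrix.mul_assoc, ← Matrix.mul_assoc V, hV, Matrix.one_mul, hR]
  have hμ : ∀ j, μ j = (X * V)ᵀ j ⬝ᵥ (X * V)ᵀ j := fun j => by
    rw [← diagonal_apply_eq μ j, ← hXV]; rfl
  have hA : ∀ j, Aᵀ j ⬝ᵥ Aᵀ j ≤ μ j := fun j => by
    have := transpose_mul_dotProduct_self_le hL (X * V) j
    rwa [hXV, diagonal_apply_eq] at this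
  refine ⟨fun j => (Aᵀ j ⬝ᵥ Aᵀ j / μ j + Bᵀ j ⬝ᵥ Bᵀ j) / 2, fun j => ?_, fun j => ?_, ?_, ?_⟩
  · have := div_nonneg (dotProduct_self_nonneg (Aᵀ j)) ((hμ j).symm ▸ dotProduct_self_nonneg _)
    linarith [dotProduct_self_nonneg (Bᵀ j)]
  · linarith [div_le_one_of_le₀ (hA j) ((hμ j).symm ▸ dotProduct_self_nonneg _),
      transpose_dotProduct_self_le_one hB j]
  · have hsumB : ∑ j, Bᵀ j ⬝ᵥ Bᵀ j = Fintype.card K := by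
      rw [← trace_mul_transpose_eq_sum_dotProduct, hB, trace_one]
    rw [← sum_div, sum_add_distrib, hsumB]
    linarith [sum_dotProduct_div_le_card hXV hL]
  · calc (L * X * Rᵀ).trace = (A * Bᵀ).trace := by
          simp only [A, B, transpose_mul, Matrix.mul_assoc]
          rw [← Matrix.mul_assoc V, hV, Matrix.one_mul]
      _ = ∑ j, Aᵀ j ⬝ᵥ Bᵀ j := trace_mul_transpose_eq_sum_dotProduct A B
      _ ≤ _ := sum_le_sum fun j _ => dotProduct_le_sqrt_mul_add_div_two (hA j)

theorem sum_sqrt_eigenvalues_mul_le_sum_svals {I J : Type*} [Fintype I] [Fintype J]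
    [DecidableEq J] (X : Matrix I J ℝ) {r : ℕ} (c : J → ℝ) (hc0 : ∀ j, 0 ≤ c j)
    (hc1 : ∀ j, c j ≤ 1) (hcr : ∑ j, c j ≤ r) :
    ∑ j, √((isHermitian_conjTranspose_mul_self X).eigenvalues j) * c j ≤
      ∑ i ∈ range r, svals X i := by
  obtain ⟨e, he⟩ := exists_equiv_svals_eq X
  rw [← e.sum_comp]
  simp_rw [← he]
  exact sum_mul_le_sum_range_of_antitone (svals_antitone X) (svals_nonneg X r) (c ∘ e)
    (fun _ => hc0 _) (fun _ => hc1 _) (by rwa [Function.comp_def, e.sum_comp])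

theorem stmt_8_general {m n r : ℕ} (X : Matrix (Fin m) (Fin n) ℝ)
    (L : Matrix (Fin r) (Fin m) ℝ) (R : Matrix (Fin r) (Fin n) ℝ)
    (hL : L * Lᵀ = 1) (hR : R * Rᵀ = 1) :
    (L * X * Rᵀ).trace ≤ ∑ i ∈ Finset.range r, svals X i := by
  obtain ⟨V, hV, hXV⟩ := exists_mul_transpose_eq_one_and_transpose_mul_eq_diagonal X
  obtain ⟨c, hc0, hc1, hcr, htr⟩ := exists_weights_trace_le_sum_sqrt_mul hV hXV hL hR
  rw [Fintype.card_fin] at hcr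
  exact htr.trans (sum_sqrt_eigenvalues_mul_le_sum_svals X c hc0 hc1 hcr)

/-- Von Neumann's trace inequality for partial isometries: if `L Lᵀ = I_r` and
`R Rᵀ = I_r`, then `tr(L X Rᵀ) ≤ σ₁(X) + ⋯ + σ_r(X)`. -/
theorem stmt_8 {m n r : ℕ} (hr : r ≤ min m n) (X : Matrix (Fin m) (Fin n) ℝ)
    (L : Matrix (Fin r) (Fin m) ℝ) (R : Matrix (Fin r) (Fin n) ℝ)
    (hL : L * Lᵀ = 1) (hR : R * Rᵀ = 1) :
    (L * X * Rᵀ).trace ≤ ∑ i ∈ Finset.range r, svals X i :=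
  stmt_8_general X L R hL hR
end

section
/- Let W be an n×n real symmetric positive definite matrix and let r < n. If the truncated nuclear norm of the 4n×3n matrix Z(W,H,Δ) (defined as the block matrix [[I_n,0,(A+Δ)ᵀ],[0,I_n,I_n],[Hᵀ,−W,−BBᵀ],[−W,H,0]]) at truncation level 2n equals 0, i.e., σ_i(Z) = 0 for all i > 2n, then (A+Δ)W(A+Δ)ᵀ − W + BBᵀ = 0. -/
/-! The vanishing of the singular values beyond the `2n`-th bounds `rank Z ≤ 2n`. Since the
top-left block of `Z` is the identity `I_{2n}`, this forces the Schur complement of that block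
to vanish, and its two block rows read `H = W(A+Δ)ᵀ` and `-BBᵀ = Hᵀ(A+Δ)ᵀ - W`; substituting
the first into the second, with `Wᵀ = W`, gives the claim. -/

open Matrix

lemma rank_eq_card_svals_ne_zero {I J : Type*} [Fintype I] [Fintype J] [DecidableEq J]
    (X : Matrix I J ℝ) :
    X.rank = Fintype.card {i : Fin (Fintype.card J) // svals X i ≠ 0} := by
  set hA := isHermitian_conjTranspose_mul_self X
  set f : Fin (Fintype.card J) → ℝ := fun j =>
    Real.sqrt (hA.eigenvalues ((Fintype.equivFin J).symm j))
  rw [← rank_conjTranspose_mul_self, hA.rank_eq_card_non_zero_eigs]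
  refine (Fintype.card_congr (((Fin.revPerm.trans (Tuple.sort f)).trans
    (Fintype.equivFin J).symm).subtypeEquiv fun i => ?_)).symm
  simp only [svals, Fin.is_lt, dif_pos]
  exact not_congr (Real.sqrt_eq_zero (eigenvalues_conjTranspose_mul_self_nonneg X _))

lemma rank_le_of_svals_eq_zero {I J : Type*} [Fintype I] [Fintype J] [DecidableEq J]
    (X : Matrix I J ℝ) {k : ℕ} (h : ∀ i : ℕ, k ≤ i → svals X i = 0) : X.rank ≤ k := by
  rw [rank_eq_card_svals_ne_zero]
  let toFin (i : {i : Fin (Fintype.card J) // svals X i ≠ 0}) : Fin k :=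
    ⟨i.1, not_le.mp fun hi => i.2 (h i.1 hi)⟩
  calc _ ≤ Fintype.card (Fin k) :=
        Fintype.card_le_of_injective toFin fun i j hij => Subtype.ext (Fin.ext (Fin.mk.inj hij))
    _ = k := Fintype.card_fin k

/-- A nonzero entry of the Schur complement `D - C * B` yields an invertible
`(card m + 1)`-square submatrix of `[[1, B], [C, D]]`. -/
lemma Matrix.eq_mul_of_rank_fromBlocks_one_le {K m n o : Type*} [Field K] [Fintype m]
    [Fintype o] [DecidableEq m] (B : Matrix m o K) (C : Matrix n m K) (D : Matrix n o K)
    (h : (fromBlocks 1 B C D).rank ≤ Fintype.card m) : D = C * B := by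
  by_contra hne
  obtain ⟨q, r, hqr⟩ : ∃ q r, D q r ≠ (C * B) q r := by
    by_contra! hc
    exact hne (Matrix.ext hc)
  let S := (fromBlocks 1 B C D).submatrix (Sum.map id fun _ : Unit => q)
    (Sum.map id fun _ : Unit => r)
  have hS : S = fromBlocks 1 (B.submatrix id fun _ => r) (C.submatrix (fun _ => q) id)
      (D.submatrix (fun _ => q) fun _ => r) := by
    ext (i | i) (j | j) <;> rfl
  have hdet : S.det ≠ 0 := by
    rw [hS, det_fromBlocks_one₁₁, det_unique]
    simpa [sub_eq_zero, mul_apply] using hqr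
  have := rank_submatrix_le (fromBlocks 1 B C D) (Sum.map id fun _ : Unit => q)
    (Sum.map id fun _ : Unit => r)
  rw [rank_of_det_ne_zero hdet, Fintype.card_sum, Fintype.card_unit] at this
  omega

/-- If `W ≻ 0` and the truncated nuclear norm at level `2n` of the structured `4n × 3n`
matrix `Z(W,H,Δ) = [[I,0,(A+Δ)ᵀ],[0,I,I],[Hᵀ,−W,−BBᵀ],[−W,H,0]]` vanishes, i.e.
`σ_i(Z) = 0` for all `i > 2n`, then `(A+Δ)W(A+Δ)ᵀ − W + BBᵀ = 0`. -/
theorem stmt_11 {n m : ℕ} (A W H Δ : Matrix (Fin n) (Fin n) ℝ)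
    (B : Matrix (Fin n) (Fin m) ℝ) (hW : W.PosDef)
    (Z : Matrix ((Fin n ⊕ Fin n) ⊕ (Fin n ⊕ Fin n)) ((Fin n ⊕ Fin n) ⊕ Fin n) ℝ)
    (hZ : Z = Matrix.fromBlocks
      (1 : Matrix (Fin n ⊕ Fin n) (Fin n ⊕ Fin n) ℝ)
      (Matrix.fromRows (A + Δ)ᵀ (1 : Matrix (Fin n) (Fin n) ℝ))
      (Matrix.fromBlocks Hᵀ (-W) (-W) H)
      (Matrix.fromRows (-(B * Bᵀ)) (0 : Matrix (Fin n) (Fin n) ℝ)))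
    (hTNN : ∀ i : ℕ, 2 * n ≤ i → svals Z i = 0) :
    (A + Δ) * W * (A + Δ)ᵀ - W + B * Bᵀ = 0 := by
  have hrank := rank_le_of_svals_eq_zero Z hTNN
  rw [hZ, show 2 * n = Fintype.card (Fin n ⊕ Fin n) by simp; ring] at hrank
  have hschur := eq_mul_of_rank_fromBlocks_one_le _ _ _ hrank
  rw [fromBlocks_mul_fromRows, fromRows_inj.eq_iff] at hschur
  obtain ⟨hBB, hH₀⟩ := hschur
  have hH : H = W * (A + Δ)ᵀ := by
    rw [← sub_eq_zero, ← neg_add_eq_sub]; simpa [Matrix.neg_mul] using hH₀.symm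
  have hWt : Wᵀ = W := hW.isHermitian
  rw [← neg_neg (B * Bᵀ), hBB, hH, transpose_mul, transpose_transpose, hWt, Matrix.mul_one]
  abel
end

section
/- Let X ∈ ℝ^{m×n} have rank q and compact SVD X = U_q S_q V_qᵀ with S_q = diag(σ₁,…,σ_q), σ_i > 0, U_q ∈ ℝ^{m×q} and V_q ∈ ℝ^{n×q} having orthonormal columns. Then every matrix of the form U_q V_qᵀ + Y with Y ∈ ℝ^{m×n} satisfying U_qᵀY = 0, Y V_q = 0, and operator norm ‖Y‖ ≤ 1, is a subgradient of the nuclear norm ‖·‖_∗ at X, i.e., ‖Z‖_∗ ≥ ‖X‖_∗ + ⟨U_qV_qᵀ + Y, Z − X⟩ for all Z ∈ ℝ^{m×n}. -/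
/-!
Write `G = U_q V_qᵀ + Y` and `P = 1 - V_q V_qᵀ`. Since `Y P = Y` and `U_qᵀ Y = 0`, one has
`1 - GᵀG = Pᵀ (1 - YᵀY) P`, so `‖Y‖ ≤ 1` forces `‖G‖ ≤ 1`. Expanding `⟨G, Z⟩` in an orthonormal
eigenbasis `(bⱼ)` of `ZᵀZ` and applying Cauchy–Schwarz to each `⟨G bⱼ, Z bⱼ⟩` gives
`⟨G, Z⟩ ≤ ∑ⱼ ‖Z bⱼ‖ = ‖Z‖_∗`. On the other hand `⟨G, X⟩ = tr S_q`, and `tr S_q = ‖X‖_∗` because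
`XᵀX = V_q (S_q² V_qᵀ)` while `(S_q² V_qᵀ) V_q = S_q²`: the characteristic polynomials of `AB`
and `BA` agree up to a power of the variable, so the two matrices have the same nonzero
eigenvalues. Subtracting `⟨G, X⟩ = ‖X‖_∗` from `⟨G, Z⟩ ≤ ‖Z‖_∗` is the claim.
-/

open Matrix

section Svals

variable {I J : Type*} [Fintype I] [Fintype J] [DecidableEq J]

theorem sum_range_svals (A : Matrix I J ℝ) :
    ∑ i ∈ Finset.range (Fintype.card J), svals A i =
      ∑ j, √((isHermitian_conjTranspose_mul_self A).eigenvalues j) := by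
  set f : Fin (Fintype.card J) → ℝ := fun j =>
    √((isHermitian_conjTranspose_mul_self A).eigenvalues ((Fintype.equivFin J).symm j))
  calc ∑ i ∈ Finset.range (Fintype.card J), svals A i
      = ∑ i : Fin (Fintype.card J), f (Tuple.sort f i.rev) := by
        rw [← Fin.sum_univ_eq_sum_range]
        exact Finset.sum_congr rfl fun i _ => dif_pos i.isLt
    _ = ∑ i, f i := Equiv.sum_comp (Fin.revPerm.trans (Tuple.sort f)) f
    _ = _ := Equiv.sum_comp (Fintype.equivFin J).symm
          fun j => √((isHermitian_conjTranspose_mul_self A).eigenvalues j)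

theorem sqrt_eigenvalues_le_svals_zero (A : Matrix I J ℝ) (j : J) :
    √((isHermitian_conjTranspose_mul_self A).eigenvalues j) ≤ svals A 0 := by
  set f : Fin (Fintype.card J) → ℝ := fun j =>
    √((isHermitian_conjTranspose_mul_self A).eigenvalues ((Fintype.equivFin J).symm j))
  have hpos : 0 < Fintype.card J := Fintype.card_pos_iff.mpr ⟨j⟩
  have hlast : (Tuple.sort f).symm (Fintype.equivFin J j) ≤ Fin.rev ⟨0, hpos⟩ := by
    have := ((Tuple.sort f).symm (Fintype.equivFin J j)).isLt
    rw [Fin.le_def, Fin.val_rev]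
    dsimp only
    omega
  have hmax : f (Fintype.equivFin J j) ≤ f (Tuple.sort f (Fin.rev ⟨0, hpos⟩)) := by
    simpa using Tuple.monotone_sort f hlast
  simpa [svals, hpos, f] using hmax

end Svals

namespace Matrix

open Polynomial in
theorem IsHermitian.sum_comp_eigenvalues_eq_of_mul_comm {n k : Type*} [Fintype n]
    [DecidableEq n] [Fintype k] [DecidableEq k] {H : Matrix n n ℝ} (hH : H.IsHermitian)
    {A : Matrix n k ℝ} {B : Matrix k n ℝ} (hAB : A * B = H) {d : k → ℝ}
    (hBA : B * A = diagonal d) {f : ℝ → ℝ} (hf : f 0 = 0) :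
    ∑ i, f (hH.eigenvalues i) = ∑ j, f (d j) := by
  have hd : (diagonal d).charpoly.roots = Finset.univ.val.map d := by
    rw [charpoly_diagonal, Finset.prod_eq_multiset_prod,
      ← roots_multiset_prod_X_sub_C (Finset.univ.val.map d), Multiset.map_map]
    rfl
  have hroots := congrArg roots (charpoly_mul_comm' A B)
  rw [hAB, hBA, roots_mul ((monic_X_pow _).mul H.charpoly_monic).ne_zero,
    roots_mul ((monic_X_pow _).mul (diagonal d).charpoly_monic).ne_zero, roots_X_pow, roots_X_pow,
    hH.roots_charpoly_eq_eigenvalues, hd] at hroots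
  simpa [Multiset.map_nsmul, Multiset.sum_nsmul, hf] using
    congrArg (fun s => (s.map f).sum) hroots

section Euclidean

variable {k n : Type*} [Fintype k] [Fintype n] [DecidableEq n]

theorem inner_toEuclideanLin_toEuclideanLin {l : Type*} [Fintype l] [DecidableEq l]
    (A : Matrix k n ℝ) (B : Matrix k l ℝ) (x : EuclideanSpace ℝ n) (y : EuclideanSpace ℝ l) :
    inner ℝ (toEuclideanLin A x) (toEuclideanLin B y) = inner ℝ x (toEuclideanLin (Aᵀ * B) y) := by
  classical
  rw [← conjTranspose_eq_transpose_of_trivial, toLpLin_mul_same, LinearMap.comp_apply,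
    show toLpLin 2 2 Aᴴ = toEuclideanLin Aᴴ from rfl, toEuclideanLin_conjTranspose_eq_adjoint,
    LinearMap.adjoint_inner_right]

theorem norm_toEuclideanLin_sq (A : Matrix k n ℝ) (x : EuclideanSpace ℝ n) :
    ‖toEuclideanLin A x‖ ^ 2 = inner ℝ x (toEuclideanLin (Aᵀ * A) x) := by
  rw [← real_inner_self_eq_norm_sq, inner_toEuclideanLin_toEuclideanLin]

theorem norm_sq_sub_norm_toEuclideanLin_sq (A : Matrix k n ℝ) (x : EuclideanSpace ℝ n) :
    ‖x‖ ^ 2 - ‖toEuclideanLin A x‖ ^ 2 = inner ℝ x (toEuclideanLin (1 - Aᵀ * A) x) := by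
  rw [norm_toEuclideanLin_sq, map_sub, LinearMap.sub_apply, inner_sub_right,
    show toEuclideanLin (1 : Matrix n n ℝ) = LinearMap.id from toLpLin_one 2,
    LinearMap.id_apply, real_inner_self_eq_norm_sq]

theorem IsHermitian.toEuclideanLin_eigenvectorBasis {H : Matrix n n ℝ} (hH : H.IsHermitian)
    (j : n) :
    toEuclideanLin H (hH.eigenvectorBasis j) = hH.eigenvalues j • hH.eigenvectorBasis j := by
  ext1
  rw [toLpLin_apply, hH.mulVec_eigenvectorBasis j]
  rfl

theorem norm_toEuclideanLin_sq_eq_sum (A : Matrix k n ℝ) (x : EuclideanSpace ℝ n) :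
    ‖toEuclideanLin A x‖ ^ 2 =
      ∑ j, (isHermitian_conjTranspose_mul_self A).eigenvalues j *
        inner ℝ ((isHermitian_conjTranspose_mul_self A).eigenvectorBasis j) x ^ 2 := by
  set hH := isHermitian_conjTranspose_mul_self A
  set b := hH.eigenvectorBasis
  conv_lhs => rw [norm_toEuclideanLin_sq, ← b.sum_repr' x]
  rw [← conjTranspose_eq_transpose_of_trivial, map_sum, inner_sum]
  refine Finset.sum_congr rfl fun j _ => ?_
  rw [map_smul, hH.toEuclideanLin_eigenvectorBasis, inner_smul_right, real_inner_smul_right,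
    real_inner_comm, b.sum_repr']
  ring

theorem norm_toEuclideanLin_le_of_sqrt_eigenvalues_le (A : Matrix k n ℝ) {c : ℝ} (hc : 0 ≤ c)
    (hA : ∀ j, √((isHermitian_conjTranspose_mul_self A).eigenvalues j) ≤ c)
    (x : EuclideanSpace ℝ n) :
    ‖toEuclideanLin A x‖ ≤ c * ‖x‖ := by
  set hH := isHermitian_conjTranspose_mul_self A
  refine (pow_le_pow_iff_left₀ (norm_nonneg _) (by positivity) two_ne_zero).mp ?_
  rw [norm_toEuclideanLin_sq_eq_sum, mul_pow, ← hH.eigenvectorBasis.sum_sq_norm_inner_right x,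
    Finset.mul_sum]
  refine Finset.sum_le_sum fun j _ => ?_
  rw [Real.norm_eq_abs, sq_abs]
  exact mul_le_mul_of_nonneg_right ((Real.sqrt_le_left hc).mp (hA j)) (sq_nonneg _)

theorem norm_toEuclideanLin_eigenvectorBasis (A : Matrix k n ℝ) (j : n) :
    ‖toEuclideanLin A ((isHermitian_conjTranspose_mul_self A).eigenvectorBasis j)‖ =
      √((isHermitian_conjTranspose_mul_self A).eigenvalues j) := by
  set hH := isHermitian_conjTranspose_mul_self A
  rw [← Real.sqrt_sq (norm_nonneg _), norm_toEuclideanLin_sq,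
    ← conjTranspose_eq_transpose_of_trivial, hH.toEuclideanLin_eigenvectorBasis,
    real_inner_smul_right, real_inner_self_eq_norm_sq, hH.eigenvectorBasis.orthonormal.1 j,
    one_pow, mul_one]

theorem trace_transpose_mul_eq_sum_inner {ι : Type*} [Fintype ι] (G Z : Matrix k n ℝ)
    (b : OrthonormalBasis ι ℝ (EuclideanSpace ℝ n)) :
    (Gᵀ * Z).trace = ∑ j, inner ℝ (toEuclideanLin G (b j)) (toEuclideanLin Z (b j)) := by
  have htrace : LinearMap.trace ℝ _ (toEuclideanLin (Gᵀ * Z)) = (Gᵀ * Z).trace := by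
    rw [toEuclideanLin_eq_toLin_orthonormal]
    exact (Gᵀ * Z).trace_toLin_eq _
  rw [← htrace, LinearMap.trace_eq_sum_inner _ b]
  simp only [inner_toEuclideanLin_toEuclideanLin]

theorem trace_transpose_mul_le_sum_sqrt_eigenvalues (G Z : Matrix k n ℝ)
    (hG : ∀ x, ‖toEuclideanLin G x‖ ≤ ‖x‖) :
    (Gᵀ * Z).trace ≤ ∑ j, √((isHermitian_conjTranspose_mul_self Z).eigenvalues j) := by
  set b := (isHermitian_conjTranspose_mul_self Z).eigenvectorBasis
  rw [trace_transpose_mul_eq_sum_inner G Z b]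
  refine Finset.sum_le_sum fun j _ => ?_
  calc inner ℝ (toEuclideanLin G (b j)) (toEuclideanLin Z (b j))
      ≤ ‖toEuclideanLin G (b j)‖ * ‖toEuclideanLin Z (b j)‖ := real_inner_le_norm _ _
    _ ≤ ‖b j‖ * ‖toEuclideanLin Z (b j)‖ := by gcongr; exact hG _
    _ = _ := by rw [b.orthonormal.1 j, one_mul, norm_toEuclideanLin_eigenvectorBasis]

end Euclidean

section CompactSVD

variable {m n q : Type*} [Fintype m] [Fintype n] [Fintype q] [DecidableEq q]
  {U : Matrix m q ℝ} {V : Matrix n q ℝ} {Y : Matrix m n ℝ}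

theorem one_sub_transpose_mul_self_mul_transpose_add [DecidableEq n] (hU : Uᵀ * U = 1)
    (hV : Vᵀ * V = 1) (hYU : Uᵀ * Y = 0) (hYV : Y * V = 0) :
    1 - (U * Vᵀ + Y)ᵀ * (U * Vᵀ + Y) = (1 - V * Vᵀ)ᵀ * ((1 - Yᵀ * Y) * (1 - V * Vᵀ)) := by
  have hYtU : Yᵀ * U = 0 := by rw [← transpose_transpose U, ← transpose_mul, hYU, transpose_zero]
  have hGtG : (U * Vᵀ + Y)ᵀ * (U * Vᵀ + Y) = V * Vᵀ + Yᵀ * Y := by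
    simp only [transpose_add, transpose_mul, transpose_transpose, Matrix.add_mul, Matrix.mul_add,
      Matrix.mul_assoc]
    rw [← Matrix.mul_assoc Uᵀ U, hU, Matrix.one_mul, hYU, ← Matrix.mul_assoc Yᵀ U, hYtU]
    simp
  have hP : (1 - V * Vᵀ)ᵀ = 1 - V * Vᵀ := by simp
  have hPP : (1 - V * Vᵀ) * (1 - V * Vᵀ) = 1 - V * Vᵀ := by
    simp only [Matrix.sub_mul, Matrix.mul_sub, Matrix.one_mul, Matrix.mul_one, Matrix.mul_assoc]
    rw [← Matrix.mul_assoc Vᵀ V, hV, Matrix.one_mul]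
    abel
  have hYP : Y * (1 - V * Vᵀ) = Y := by
    rw [Matrix.mul_sub, ← Matrix.mul_assoc, hYV, Matrix.zero_mul, Matrix.mul_one, sub_zero]
  have hPYt : (1 - V * Vᵀ) * Yᵀ = Yᵀ := by
    rw [← hP, ← transpose_mul, hYP]
  rw [hGtG, hP]
  calc 1 - (V * Vᵀ + Yᵀ * Y)
      = (1 - V * Vᵀ) * (1 - V * Vᵀ) - (1 - V * Vᵀ) * Yᵀ * (Y * (1 - V * Vᵀ)) := by
        rw [hPP, hPYt, hYP, sub_add_eq_sub_sub]
    _ = (1 - V * Vᵀ) * ((1 - Yᵀ * Y) * (1 - V * Vᵀ)) := by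
        simp only [Matrix.sub_mul, Matrix.mul_sub, Matrix.one_mul, Matrix.mul_one,
          Matrix.mul_assoc]
        abel

theorem norm_toEuclideanLin_mul_transpose_add_le [DecidableEq n] (hU : Uᵀ * U = 1)
    (hV : Vᵀ * V = 1) (hYU : Uᵀ * Y = 0) (hYV : Y * V = 0)
    (hY : ∀ x, ‖toEuclideanLin Y x‖ ≤ ‖x‖) (x : EuclideanSpace ℝ n) :
    ‖toEuclideanLin (U * Vᵀ + Y) x‖ ≤ ‖x‖ := by
  have h := norm_sq_sub_norm_toEuclideanLin_sq (U * Vᵀ + Y) x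
  rw [one_sub_transpose_mul_self_mul_transpose_add hU hV hYU hYV,
    ← inner_toEuclideanLin_toEuclideanLin, toLpLin_mul_same, LinearMap.comp_apply,
    show toLpLin 2 2 (1 - Yᵀ * Y) = toEuclideanLin (1 - Yᵀ * Y) from rfl,
    ← norm_sq_sub_norm_toEuclideanLin_sq] at h
  have hPx := hY (toEuclideanLin (1 - V * Vᵀ) x)
  refine (pow_le_pow_iff_left₀ (norm_nonneg _) (norm_nonneg _) two_ne_zero).mp ?_
  nlinarith [norm_nonneg (toEuclideanLin Y (toEuclideanLin (1 - V * Vᵀ) x))]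

theorem trace_transpose_mul_transpose_add_mul_diagonal_mul_transpose (hU : Uᵀ * U = 1)
    (hV : Vᵀ * V = 1) (hYU : Uᵀ * Y = 0) (σ : q → ℝ) :
    ((U * Vᵀ + Y)ᵀ * (U * diagonal σ * Vᵀ)).trace = ∑ i, σ i := by
  have hYtU : Yᵀ * U = 0 := by rw [← transpose_transpose U, ← transpose_mul, hYU, transpose_zero]
  simp only [transpose_add, transpose_mul, transpose_transpose, Matrix.add_mul, Matrix.mul_assoc]
  rw [← Matrix.mul_assoc Uᵀ U, hU, Matrix.one_mul, ← Matrix.mul_assoc Yᵀ U, hYtU,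
    Matrix.zero_mul, add_zero, trace_mul_comm, Matrix.mul_assoc, hV, Matrix.mul_one,
    trace_diagonal]

theorem sum_sqrt_eigenvalues_mul_diagonal_mul_transpose [DecidableEq n] (hU : Uᵀ * U = 1)
    (hV : Vᵀ * V = 1) {σ : q → ℝ} (hσ : ∀ i, 0 ≤ σ i) :
    ∑ j, √((isHermitian_conjTranspose_mul_self (U * diagonal σ * Vᵀ)).eigenvalues j) =
      ∑ i, σ i := by
  have hAB : V * (diagonal (σ * σ) * Vᵀ) = (U * diagonal σ * Vᵀ)ᴴ * (U * diagonal σ * Vᵀ) := by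
    rw [conjTranspose_eq_transpose_of_trivial]
    simp only [transpose_mul, transpose_transpose, diagonal_transpose, Matrix.mul_assoc]
    rw [← Matrix.mul_assoc Uᵀ U, hU, Matrix.one_mul, ← Matrix.mul_assoc (diagonal σ),
      diagonal_mul_diagonal]
    rfl
  have hBA : diagonal (σ * σ) * Vᵀ * V = diagonal (σ * σ) := by
    rw [Matrix.mul_assoc, hV, Matrix.mul_one]
  rw [IsHermitian.sum_comp_eigenvalues_eq_of_mul_comm _ hAB hBA Real.sqrt_zero]
  exact Finset.sum_congr rfl fun i _ => Real.sqrt_mul_self (hσ i)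

end CompactSVD

end Matrix

/-- Subgradients of the nuclear norm: if `X = U_q S_q V_qᵀ` is a compact SVD (with
`σᵢ > 0` on the diagonal and `U_q`, `V_q` having orthonormal columns), then for any `Y`
with `U_qᵀ Y = 0`, `Y V_q = 0` and operator norm `‖Y‖ = σ₁(Y) ≤ 1`, the matrix
`U_q V_qᵀ + Y` is a subgradient of `‖·‖_∗` at `X`. -/
theorem stmt_16 {m n q : ℕ} (X : Matrix (Fin m) (Fin n) ℝ)
    (Uq : Matrix (Fin m) (Fin q) ℝ) (Vq : Matrix (Fin n) (Fin q) ℝ)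
    (σ : Fin q → ℝ) (hσ : ∀ i, 0 < σ i)
    (hUq : Uqᵀ * Uq = 1) (hVq : Vqᵀ * Vq = 1)
    (hX : X = Uq * Matrix.diagonal σ * Vqᵀ)
    (Y : Matrix (Fin m) (Fin n) ℝ)
    (hYU : Uqᵀ * Y = 0) (hYV : Y * Vq = 0) (hYnorm : svals Y 0 ≤ 1) :
    ∀ Z : Matrix (Fin m) (Fin n) ℝ,
      (∑ i ∈ Finset.range n, svals Z i) ≥
        (∑ i ∈ Finset.range n, svals X i) +
          ((Uq * Vqᵀ + Y)ᵀ * (Z - X)).trace := by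
  intro Z
  have hnuclear (A : Matrix (Fin m) (Fin n) ℝ) : ∑ i ∈ Finset.range n, svals A i =
      ∑ j, √((isHermitian_conjTranspose_mul_self A).eigenvalues j) := by
    simpa using sum_range_svals A
  have hY (x : EuclideanSpace ℝ (Fin n)) : ‖toEuclideanLin Y x‖ ≤ ‖x‖ := by
    simpa using norm_toEuclideanLin_le_of_sqrt_eigenvalues_le Y zero_le_one
      (fun j => (sqrt_eigenvalues_le_svals_zero Y j).trans hYnorm) x
  have hZ : ((Uq * Vqᵀ + Y)ᵀ * Z).trace ≤ ∑ i ∈ Finset.range n, svals Z i := by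
    rw [hnuclear]
    exact trace_transpose_mul_le_sum_sqrt_eigenvalues _ Z
      (norm_toEuclideanLin_mul_transpose_add_le hUq hVq hYU hYV hY)
  have hX_nuclear : ∑ i ∈ Finset.range n, svals X i = ∑ i, σ i := by
    rw [hnuclear, hX]
    exact sum_sqrt_eigenvalues_mul_diagonal_mul_transpose hUq hVq fun i => (hσ i).le
  have hX_trace : ((Uq * Vqᵀ + Y)ᵀ * X).trace = ∑ i, σ i := by
    rw [hX, trace_transpose_mul_transpose_add_mul_diagonal_mul_transpose hUq hVq hYU]
  rw [ge_iff_le, Matrix.mul_sub, trace_sub, hX_nuclear, hX_trace]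
  linarith
end
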